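/- Annotated stack tree automata are effectively closed under intersection: for any two order-n annotated stack tree automata A and A' over the same alphabet Γ and control states P, there exists an order-n annotated stack tree automaton A'' with L(A'') = L(A) ∩ L(A'). -/

import Mathlib

/-! ## Annotated stacks of order at most `n` over alphabet `Γ`.

`AnnStack Γ n k` is the type of order-`k` stacks whose symbols are annotated
by stacks of order at most `n`.  An order-`(k+1)` stack is a sequence of
order-`k` stacks; an order-`1` stack is a sequence of characters, each
annotated by a stack of some order `m` with `1 ≤ m ≤ n`. -/
inductive AnnStack (Γ : Type) (n : ℕ) : ℕ → Type where
  | nil (k : ℕ) : AnnStack Γ n k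
  | consK {k : ℕ} (hk : 1 ≤ k) (hd : AnnStack Γ n k) (tl : AnnStack Γ n (k + 1)) :
      AnnStack Γ n (k + 1)
  | cons1 {m : ℕ} (a : Γ) (hm : 1 ≤ m) (hmn : m ≤ n) (ann : AnnStack Γ n m)
      (tl : AnnStack Γ n 1) : AnnStack Γ n 1

namespace AnnStack

variable {Γ : Type} {n : ℕ}

/-- `TopRew a b j s s'`: `s'` is `s` with its top character `a` rewritten to `b`
(the annotation is kept). -/
inductive TopRew (a b : Γ) : (j : ℕ) → AnnStack Γ n j → AnnStack Γ n j → Prop where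
  | base {m : ℕ} (hm : 1 ≤ m) (hmn : m ≤ n) (ann : AnnStack Γ n m) (tl : AnnStack Γ n 1) :
      TopRew a b 1 (AnnStack.cons1 a hm hmn ann tl) (AnnStack.cons1 b hm hmn ann tl)
  | step {j : ℕ} (hj : 1 ≤ j) {hd hd' : AnnStack Γ n j} (tl : AnnStack Γ n (j + 1)) :
      TopRew a b j hd hd' →
      TopRew a b (j + 1) (AnnStack.consK hj hd tl) (AnnStack.consK hj hd' tl)

/-- `PopAt k j s s'`: `s'` is the result of applying `pop_k` to the order-`j` stack `s`. -/
inductive PopAt : (k : ℕ) → (j : ℕ) → AnnStack Γ n j → AnnStack Γ n j → Prop where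
  | base1 {m : ℕ} (a : Γ) (hm : 1 ≤ m) (hmn : m ≤ n) (ann : AnnStack Γ n m)
      (tl : AnnStack Γ n 1) : PopAt 1 1 (AnnStack.cons1 a hm hmn ann tl) tl
  | baseK {k : ℕ} (hk : 1 ≤ k) (hd : AnnStack Γ n k) (tl : AnnStack Γ n (k + 1)) :
      PopAt (k + 1) (k + 1) (AnnStack.consK hk hd tl) tl
  | step {k j : ℕ} (hj : 1 ≤ j) {hd hd' : AnnStack Γ n j} (tl : AnnStack Γ n (j + 1)) :
      PopAt k j hd hd' →
      PopAt k (j + 1) (AnnStack.consK hj hd tl) (AnnStack.consK hj hd' tl)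

/-- `PushAt k j s s'`: `s'` is the result of applying `push_k` (duplicate the
topmost order-`(k-1)` stack) to the order-`j` stack `s`. -/
inductive PushAt : (k : ℕ) → (j : ℕ) → AnnStack Γ n j → AnnStack Γ n j → Prop where
  | base {k : ℕ} (hk : 1 ≤ k) (hd : AnnStack Γ n k) (tl : AnnStack Γ n (k + 1)) :
      PushAt (k + 1) (k + 1) (AnnStack.consK hk hd tl)
        (AnnStack.consK hk hd (AnnStack.consK hk hd tl))
  | step {k j : ℕ} (hj : 1 ≤ j) {hd hd' : AnnStack Γ n j} (tl : AnnStack Γ n (j + 1)) :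
      PushAt k j hd hd' →
      PushAt k (j + 1) (AnnStack.consK hj hd tl) (AnnStack.consK hj hd' tl)

/-- `TopChar j s a`: the top character of the order-`j` stack `s` is `a`. -/
inductive TopChar : (j : ℕ) → AnnStack Γ n j → Γ → Prop where
  | base {m : ℕ} (a : Γ) (hm : 1 ≤ m) (hmn : m ≤ n) (ann : AnnStack Γ n m)
      (tl : AnnStack Γ n 1) : TopChar 1 (AnnStack.cons1 a hm hmn ann tl) a
  | step {j : ℕ} (hj : 1 ≤ j) {hd : AnnStack Γ n j} (tl : AnnStack Γ n (j + 1)) {a : Γ} :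
      TopChar j hd a → TopChar (j + 1) (AnnStack.consK hj hd tl) a

/-- `TailAt k j s r`: `r` is the order-`k` stack obtained by applying `pop_k` at the
topmost levels of the order-`j` stack `s` (the order-`k` component `s_k` of the
top-of-stack decomposition of `s`). -/
inductive TailAt : (k : ℕ) → (j : ℕ) → AnnStack Γ n j → AnnStack Γ n k → Prop where
  | base1 {m : ℕ} (a : Γ) (hm : 1 ≤ m) (hmn : m ≤ n) (ann : AnnStack Γ n m)
      (tl : AnnStack Γ n 1) : TailAt 1 1 (AnnStack.cons1 a hm hmn ann tl) tl
  | baseK {k : ℕ} (hk : 1 ≤ k) (hd : AnnStack Γ n k) (tl : AnnStack Γ n (k + 1)) :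
      TailAt (k + 1) (k + 1) (AnnStack.consK hk hd tl) tl
  | step {k j : ℕ} (hj : 1 ≤ j) {hd : AnnStack Γ n j} (tl : AnnStack Γ n (j + 1))
      {r : AnnStack Γ n k} : TailAt k j hd r →
      TailAt k (j + 1) (AnnStack.consK hj hd tl) r

/-- `Cons1Top a ann j s s'`: `s'` is `s` with the annotated character `(a, ann)`
pushed onto its topmost order-1 stack. -/
inductive Cons1Top (a : Γ) {m : ℕ} (ann : AnnStack Γ n m) :
    (j : ℕ) → AnnStack Γ n j → AnnStack Γ n j → Prop where
  | base (hm : 1 ≤ m) (hmn : m ≤ n) (t : AnnStack Γ n 1) :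
      Cons1Top a ann 1 t (AnnStack.cons1 a hm hmn ann t)
  | step {j : ℕ} (hj : 1 ≤ j) {hd hd' : AnnStack Γ n j} (tl : AnnStack Γ n (j + 1)) :
      Cons1Top a ann j hd hd' →
      Cons1Top a ann (j + 1) (AnnStack.consK hj hd tl) (AnnStack.consK hj hd' tl)

/-- `TopAnn j s m ann`: the annotation of the top character of the order-`j` stack `s`
is the order-`m` stack `ann`. -/
inductive TopAnn : (j : ℕ) → AnnStack Γ n j → (m : ℕ) → AnnStack Γ n m → Prop where
  | base {m : ℕ} (a : Γ) (hm : 1 ≤ m) (hmn : m ≤ n) (ann : AnnStack Γ n m)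
      (tl : AnnStack Γ n 1) : TopAnn 1 (AnnStack.cons1 a hm hmn ann tl) m ann
  | step {j : ℕ} (hj : 1 ≤ j) {hd : AnnStack Γ n j} (tl : AnnStack Γ n (j + 1))
      {m : ℕ} {ann : AnnStack Γ n m} : TopAnn j hd m ann →
      TopAnn (j + 1) (AnnStack.consK hj hd tl) m ann

/-- `ReplaceUpto k r j s s'`: `s'` is `s` with its topmost order-`k` component
replaced by `r` (all structure of `s` strictly above order `k` is kept). -/
inductive ReplaceUpto (k : ℕ) (r : AnnStack Γ n k) :
    (j : ℕ) → AnnStack Γ n j → AnnStack Γ n j → Prop where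
  | base (s : AnnStack Γ n k) : ReplaceUpto k r k s r
  | step {j : ℕ} (hj : 1 ≤ j) {hd hd' : AnnStack Γ n j} (tl : AnnStack Γ n (j + 1)) :
      ReplaceUpto k r j hd hd' →
      ReplaceUpto k r (j + 1) (AnnStack.consK hj hd tl) (AnnStack.consK hj hd' tl)

end AnnStack

/-- The order-`n` stack operations: `rew(a,b)`, `push_k` (2 ≤ k ≤ n),
`copy-push_k`, `pop_k`, `collapse_k` (1 ≤ k ≤ n). -/
inductive StackOp (Γ : Type) where
  | rew (a b : Γ)
  | push (k : ℕ)
  | cpush (k : ℕ)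
  | pop (k : ℕ)
  | collapse (k : ℕ)

/-- Semantics of a stack operation on order-`n` stacks. -/
def ApplyOp {Γ : Type} {n : ℕ} : StackOp Γ → AnnStack Γ n n → AnnStack Γ n n → Prop
  | .rew a b => fun s s' => AnnStack.TopRew a b n s s'
  | .push k => fun s s' => 2 ≤ k ∧ k ≤ n ∧ AnnStack.PushAt k n s s'
  | .cpush k => fun s s' => 1 ≤ k ∧ k ≤ n ∧
      ∃ (a : Γ) (ann : AnnStack Γ n k), AnnStack.TopChar n s a ∧
        AnnStack.TailAt k n s ann ∧ AnnStack.Cons1Top a ann n s s'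
  | .pop k => fun s s' => 1 ≤ k ∧ k ≤ n ∧ AnnStack.PopAt k n s s'
  | .collapse k => fun s s' => 1 ≤ k ∧ k ≤ n ∧
      ∃ ann : AnnStack Γ n k, AnnStack.TopAnn n s k ann ∧ AnnStack.ReplaceUpto k ann n s s'
/-! ## Annotated stack trees -/

/-- An (order-`n`) annotated stack tree with leaf labels drawn from `L`:
leaves are labelled by a pair of an `L`-label and an order-`n` annotated stack,
internal nodes by an order-`n` annotated stack.  Ordinary annotated stack trees
take `L = P` (the control states); "extended" trees used for partial runs take
`L = Q` (the states of a tree automaton). -/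
inductive STree (Γ : Type) (L : Type) (n : ℕ) where
  | leaf : L → AnnStack Γ n n → STree Γ L n
  | node : AnnStack Γ n n → List (STree Γ L n) → STree Γ L n

namespace STree

variable {Γ L : Type} {n : ℕ}

/-- Well-formedness: every internal node has at least one child
(so that the node/leaf distinction matches tree domains). -/
inductive TreeWF : STree Γ L n → Prop where
  | leaf (q : L) (s : AnnStack Γ n n) : TreeWF (STree.leaf q s)
  | node (s : AnnStack Γ n n) {cs : List (STree Γ L n)} :
      cs ≠ [] → (∀ t ∈ cs, TreeWF t) → TreeWF (STree.node s cs)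

/-- The stack labelling the root of a tree. -/
def rootStack : STree Γ L n → AnnStack Γ n n
  | .leaf _ s => s
  | .node s _ => s

/-- The subtree of `t` at position `v` (positions are lists of 0-based child indices). -/
def subtreeAt : STree Γ L n → List ℕ → Option (STree Γ L n)
  | t, [] => some t
  | .leaf _ _, _ :: _ => none
  | .node _ cs, i :: v =>
      match cs[i]? with
      | some c => subtreeAt c v
      | none => none

/-- Replace the subtree of `t` at position `v` by `r`. -/
def replaceAt : STree Γ L n → List ℕ → STree Γ L n → Option (STree Γ L n)
  | _, [], r => some r
  | .leaf _ _, _ :: _, _ => none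
  | .node s cs, i :: v, r =>
      match cs[i]? with
      | some c => (replaceAt c v r).map fun c' => STree.node s (cs.set i c')
      | none => none

/-- `LeavesAre t ls`: the left-to-right sequence of leaf labels of `t` is `ls`. -/
inductive LeavesAre : STree Γ L n → List L → Prop where
  | leaf (q : L) (s : AnnStack Γ n n) : LeavesAre (STree.leaf q s) [q]
  | node (s : AnnStack Γ n n) {cs : List (STree Γ L n)} {ls : List (List L)} :
      cs.length = ls.length →
      (∀ i (h1 : i < cs.length) (h2 : i < ls.length),
        LeavesAre (cs.get ⟨i, h1⟩) (ls.get ⟨i, h2⟩)) →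
      LeavesAre (STree.node s cs) ls.flatten

/-- `LeafPosList t vs`: the left-to-right sequence of leaf positions of `t` is `vs`. -/
inductive LeafPosList : STree Γ L n → List (List ℕ) → Prop where
  | leaf (q : L) (s : AnnStack Γ n n) : LeafPosList (STree.leaf q s) [[]]
  | node (s : AnnStack Γ n n) {cs : List (STree Γ L n)} {pss : List (List (List ℕ))} :
      cs.length = pss.length →
      (∀ i (h1 : i < cs.length) (h2 : i < pss.length),
        LeafPosList (cs.get ⟨i, h1⟩) (pss.get ⟨i, h2⟩)) →
      LeafPosList (STree.node s cs)
        ((pss.mapIdx fun i ps => ps.map fun v => i :: v).flatten)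

/-- There is a leaf of `t` at position `v`. -/
def HasLeafAt (t : STree Γ L n) (v : List ℕ) : Prop :=
  ∃ (q : L) (s : AnnStack Γ n n), subtreeAt t v = some (STree.leaf q s)

/-- There is a leaf of `t` at position `v` with label `q`. -/
def LeafLabelAt (t : STree Γ L n) (v : List ℕ) (q : L) : Prop :=
  ∃ s : AnnStack Γ n n, subtreeAt t v = some (STree.leaf q s)

end STree

/-! ## Ground annotated stack tree rewrite systems -/

/-- The operations of a GASTRS: stack operations applied at a leaf,
node creation (fork) and node destruction (join). -/
inductive TRule (Γ P : Type) where
  | op : P → StackOp Γ → P → TRule Γ P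
  | create : P → List P → TRule Γ P
  | destroy : List P → P → TRule Γ P

/-- An order-`n` ground annotated stack tree rewrite system:
a finite set of operations over alphabet `Γ` and control states `P`. -/
structure GASTRS (Γ P : Type) where
  R : Set (TRule Γ P)
  finR : R.Finite

/-- One-step rewriting of (possibly extended) stack trees, where control states
are embedded into the leaf-label type `L` via `ι`.  Operations apply at leaves. -/
inductive StepI {Γ P L : Type} {n : ℕ} (G : GASTRS Γ P) (ι : P → L) :
    STree Γ L n → STree Γ L n → Prop where
  | op {p : P} {θ : StackOp Γ} {p' : P} {s s' : AnnStack Γ n n} :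
      TRule.op p θ p' ∈ G.R → ApplyOp θ s s' →
      StepI G ι (STree.leaf (ι p) s) (STree.leaf (ι p') s')
  | create {p : P} {ps : List P} {s : AnnStack Γ n n} :
      TRule.create p ps ∈ G.R → ps ≠ [] →
      StepI G ι (STree.leaf (ι p) s)
        (STree.node s (ps.map fun p' => STree.leaf (ι p') s))
  | destroy {ps : List P} {p : P} {cs : List (STree Γ L n)} {s : AnnStack Γ n n} :
      TRule.destroy ps p ∈ G.R → ps ≠ [] →
      List.Forall₂ (fun (p' : P) (c : STree Γ L n) =>
        ∃ s' : AnnStack Γ n n, c = STree.leaf (ι p') s') ps cs →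
      StepI G ι (STree.node s cs) (STree.leaf (ι p) s)
  | ctx {s : AnnStack Γ n n} (l₁ l₂ : List (STree Γ L n)) {t t' : STree Γ L n} :
      StepI G ι t t' →
      StepI G ι (STree.node s (l₁ ++ t :: l₂)) (STree.node s (l₁ ++ t' :: l₂))

/-- Reachability: the reflexive-transitive closure of one-step rewriting. -/
def Reaches {Γ P L : Type} {n : ℕ} (G : GASTRS Γ P) (ι : P → L) :
    STree Γ L n → STree Γ L n → Prop :=
  Relation.ReflTransGen (StepI G ι)

/-- In `G` there is at most one node-destruction rule per resulting control state. -/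
def UniqueDestroy {Γ P : Type} (G : GASTRS Γ P) : Prop :=
  ∀ (ps ps' : List P) (p : P),
    TRule.destroy ps p ∈ G.R → TRule.destroy ps' p ∈ G.R → ps = ps'
/-! ## Annotated stack tree automata

An order-`n` annotated stack tree automaton is a bottom-up tree automaton whose
transitions `q —(i,m),σ→ q'` are labelled by states `σ` of a nested alternating
stack automaton.  We split the data into a *carrier* (the states, the embedding
of the control states, the final state sets) and the *transition relations*,
so that saturation (which adds transitions over a fixed carrier)
can be expressed as a function on transition structures. -/

/-- The carrier of an annotated stack tree automaton:
tree states `Q ⊇ P`, final tree states `F`, stack-automaton states `SS`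
(the states of all orders live in `SS`) and accepting stack states `Fs k`
for each order `k`. -/
structure ASTCarrier (Γ P : Type) where
  Q : Type
  ι : P → Q
  ι_inj : Function.Injective ι
  F : Set Q
  SS : Type
  Fs : ℕ → Set SS

/-- The transitions of an annotated stack tree automaton over carrier `C`:
* `deltaT q i m q' σ` : a tree transition `q —(i,m),σ→ q'`;
* `deltaHi k σ σ' S` : an order-`k` stack transition `σ —σ'→ S` (used for `k ≥ 2`);
* `delta1 σ a mb Sb S` : an order-`1` stack transition `σ —a,S_b→ S` where the
  annotation of `a` is read from all states of `Sb` (a set of order-`mb` states). -/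
structure ASTTrans (Γ : Type) {P : Type} (C : ASTCarrier Γ P) where
  deltaT : C.Q → ℕ → ℕ → C.Q → C.SS → Prop
  deltaHi : ℕ → C.SS → C.SS → Set C.SS → Prop
  delta1 : C.SS → Γ → ℕ → Set C.SS → Set C.SS → Prop

variable {Γ P : Type}

/-- The stack-automaton states occurring in some transition of `D`. -/
def statesOf (C : ASTCarrier Γ P) (D : ASTTrans Γ C) : Set C.SS :=
  {σ | (∃ q i m q', D.deltaT q i m q' σ) ∨
       (∃ k σ' S, D.deltaHi k σ σ' S) ∨
       (∃ k τ S, D.deltaHi k τ σ S) ∨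
       (∃ k τ σ' S, D.deltaHi k τ σ' S ∧ σ ∈ S) ∨
       (∃ a mb Sb S, D.delta1 σ a mb Sb S) ∨
       (∃ τ a mb Sb S, D.delta1 τ a mb Sb S ∧ (σ ∈ Sb ∨ σ ∈ S))}

/-- The automaton `(C, D)` is a *finite* automaton: finitely many tree states,
finitely many stack states occurring in transitions, finite accepting sets. -/
def FiniteAut (C : ASTCarrier Γ P) (D : ASTTrans Γ C) : Prop :=
  Finite C.Q ∧ (statesOf C D).Finite ∧ ∀ k, (C.Fs k).Finite

/-- Acceptance of annotated stacks by the nested alternating stack automaton: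
`SAcc n C D k σ s` holds iff the order-`k` stack `s` is accepted from state `σ`.
A subset of `Fs k` must be reached at the end of each order-`k` stack;
annotations are read in an alternating fashion. -/
inductive SAcc (n : ℕ) (C : ASTCarrier Γ P) (D : ASTTrans Γ C) :
    (k : ℕ) → C.SS → AnnStack Γ n k → Prop where
  | nil {k : ℕ} {σ : C.SS} : σ ∈ C.Fs k → SAcc n C D k σ (AnnStack.nil k)
  | consK {k : ℕ} (hk : 1 ≤ k) {σ σ' : C.SS} {S : Set C.SS}
      {hd : AnnStack Γ n k} {tl : AnnStack Γ n (k + 1)} :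
      D.deltaHi (k + 1) σ σ' S → SAcc n C D k σ' hd →
      (∀ τ ∈ S, SAcc n C D (k + 1) τ tl) →
      SAcc n C D (k + 1) σ (AnnStack.consK hk hd tl)
  | cons1 {m : ℕ} (a : Γ) (hm : 1 ≤ m) (hmn : m ≤ n) {σ : C.SS} {Sb S : Set C.SS}
      {ann : AnnStack Γ n m} {tl : AnnStack Γ n 1} :
      D.delta1 σ a m Sb S → (∀ τ ∈ Sb, SAcc n C D m τ ann) →
      (∀ τ ∈ S, SAcc n C D 1 τ tl) →
      SAcc n C D 1 σ (AnnStack.cons1 a hm hmn ann tl)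

/-- `IsRun n C D lab t ρ`: `ρ` (assigning a tree state to every position) is a
run of the automaton over the tree `t` whose leaf labels are mapped into tree
states by `lab`: every leaf is labelled by its (embedded) control state, and
the label of each internal node is justified by transitions reading the states
and stacks of all its children. -/
def IsRun (n : ℕ) (C : ASTCarrier Γ P) (D : ASTTrans Γ C) {L : Type} (lab : L → C.Q)
    (t : STree Γ L n) (ρ : List ℕ → C.Q) : Prop :=
  (∀ (v : List ℕ) (q : L) (s : AnnStack Γ n n),
      STree.subtreeAt t v = some (STree.leaf q s) → ρ v = lab q) ∧
  (∀ (v : List ℕ) (s : AnnStack Γ n n) (cs : List (STree Γ L n)),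
      STree.subtreeAt t v = some (STree.node s cs) →
      ∀ i (hi : i < cs.length), ∃ σ : C.SS,
        D.deltaT (ρ v) (i + 1) cs.length (ρ (v ++ [i])) σ ∧
        SAcc n C D n σ (STree.rootStack (cs.get ⟨i, hi⟩)))

/-- The root of the run is read by a transition from a final state. -/
def RootAcc (n : ℕ) (C : ASTCarrier Γ P) (D : ASTTrans Γ C) {L : Type}
    (t : STree Γ L n) (ρ : List ℕ → C.Q) : Prop :=
  ∃ (qf : C.Q) (σ : C.SS), qf ∈ C.F ∧ D.deltaT qf 1 1 (ρ []) σ ∧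
    SAcc n C D n σ (STree.rootStack t)

/-- The automaton accepts the tree `t` (with leaf labels embedded by `lab`). -/
def AcceptsFrom (n : ℕ) (C : ASTCarrier Γ P) (D : ASTTrans Γ C) {L : Type}
    (lab : L → C.Q) (t : STree Γ L n) : Prop :=
  ∃ ρ : List ℕ → C.Q, IsRun n C D lab t ρ ∧ RootAcc n C D t ρ

/-- The language of the automaton: the set of (well-formed) order-`n` annotated
stack trees over `Γ` and `P` that it accepts. -/
def Lang (n : ℕ) (C : ASTCarrier Γ P) (D : ASTTrans Γ C) : Set (STree Γ P n) :=
  {t | STree.TreeWF t ∧ AcceptsFrom n C D C.ι t}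

/-- The extended-sense language `L_{qs}`: trees whose leaves carry arbitrary
states of the automaton (prefixes of accepting runs), with leaf state
sequence `qs`. -/
def LangExt (n : ℕ) (C : ASTCarrier Γ P) (D : ASTTrans Γ C) (qs : List C.Q) :
    Set (STree Γ C.Q n) :=
  {t | STree.TreeWF t ∧ STree.LeavesAre t qs ∧ AcceptsFrom n C D id t}

/-- `pre*(G, A₀)`: the set of trees from which a tree of `L(A₀)` is reachable. -/
def preStar (n : ℕ) (G : GASTRS Γ P) (C : ASTCarrier Γ P) (D₀ : ASTTrans Γ C) :
    Set (STree Γ P n) :=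
  {t | ∃ t', Reaches G id t t' ∧ t' ∈ Lang n C D₀}

/-- A set of order-`n` annotated stack trees is regular if it is the language of
some finite order-`n` annotated stack tree automaton. -/
def RegularSet (n : ℕ) (S : Set (STree Γ P n)) : Prop :=
  ∃ (C : ASTCarrier Γ P) (D : ASTTrans Γ C), FiniteAut C D ∧ Lang n C D = S

/-- The marking used by the emptiness algorithm: control states are marked, and
a state `q` is marked if for some `m ≥ 1` and every `1 ≤ i ≤ m` there is a
transition `q —(i,m),σ→ q'` with `q'` marked and the stack language of `σ`
nonempty. -/
inductive Marked (n : ℕ) (C : ASTCarrier Γ P) (D : ASTTrans Γ C) : C.Q → Prop where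
  | base (p : P) : Marked n C D (C.ι p)
  | step {q : C.Q} {m : ℕ} (qs : ℕ → C.Q) (σs : ℕ → C.SS) : 1 ≤ m →
      (∀ i, 1 ≤ i → i ≤ m →
        D.deltaT q i m (qs i) (σs i) ∧ ∃ s : AnnStack Γ n n, SAcc n C D n (σs i) s) →
      (∀ i, 1 ≤ i → i ≤ m → Marked n C D (qs i)) →
      Marked n C D q

/-- `σ` labels some tree transition of `D`. -/
def TreeLabel (C : ASTCarrier Γ P) (D : ASTTrans Γ C) (σ : C.SS) : Prop :=
  ∃ q i m q', D.deltaT q i m q' σ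

/-- `σ` is the intermediate label of some higher-order stack transition of `D`. -/
def HiLabel (C : ASTCarrier Γ P) (D : ASTTrans Γ C) (σ : C.SS) : Prop :=
  ∃ k τ S, D.deltaHi k τ σ S

/-- `σ` has an incoming stack transition (it occurs in a target set or
in an annotation set). -/
def IncomingS (C : ASTCarrier Γ P) (D : ASTTrans Γ C) (σ : C.SS) : Prop :=
  (∃ k τ σ' S, D.deltaHi k τ σ' S ∧ σ ∈ S) ∨
  (∃ τ a mb Sb S, D.delta1 τ a mb Sb S ∧ (σ ∈ Sb ∨ σ ∈ S))

/-- Normalization of an automaton, as assumed by the saturation algorithm: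
control states have no incoming tree transitions and are non-final; tree
transitions are well-indexed, avoid final targets, and have unique labels per
endpoints (and dually for stack transitions);  initial stack states (the
labels) have no incoming transitions, are non-final, and label exactly one
transition. -/
def Normalized (n : ℕ) (C : ASTCarrier Γ P) (D : ASTTrans Γ C) : Prop :=
  (∀ (p : P) i m (q : C.Q) σ, ¬ D.deltaT (C.ι p) i m q σ) ∧
  (∀ p : P, C.ι p ∉ C.F) ∧
  (∀ q i m q' σ, D.deltaT q i m q' σ → 1 ≤ i ∧ i ≤ m ∧ q' ∉ C.F) ∧
  (∀ q i m q' σ τ, D.deltaT q i m q' σ → D.deltaT q i m q' τ → σ = τ) ∧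
  (∀ k σ S σ₁ σ₂, D.deltaHi k σ σ₁ S → D.deltaHi k σ σ₂ S → σ₁ = σ₂) ∧
  (∀ σ, TreeLabel C D σ ∨ HiLabel C D σ →
    ¬ IncomingS C D σ ∧ ∀ k, σ ∉ C.Fs k) ∧
  (∀ σ, TreeLabel C D σ → ¬ HiLabel C D σ ∧
    ∀ q i m q' r i' m' r', D.deltaT q i m q' σ → D.deltaT r i' m' r' σ →
      q = r ∧ i = i' ∧ m = m' ∧ q' = r') ∧
  (∀ σ, HiLabel C D σ →
    ∀ k τ S k' τ' S', D.deltaHi k τ σ S → D.deltaHi k' τ' σ S' →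
      k = k' ∧ τ = τ' ∧ S = S')
/-! ## Long-form (short-form) transitions and the saturation function -/

variable {Γ P : Type}

/-- `LongS C D k σ a mb Sb Ss`: the long-form stack transition
`σ —a,Sb→ (Ss 1, …, Ss k)` exists in `D`: there is a chain of transitions
reading the topmost part of each level, ending in an order-1 transition
reading `a` with annotation set `Sb` (of order `mb`). -/
def LongS (C : ASTCarrier Γ P) (D : ASTTrans Γ C) (k : ℕ) (σ : C.SS) (a : Γ)
    (mb : ℕ) (Sb : Set C.SS) (Ss : ℕ → Set C.SS) : Prop :=
  ∃ c : ℕ → C.SS, c k = σ ∧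
    (∀ j, 2 ≤ j → j ≤ k → D.deltaHi j (c j) (c (j - 1)) (Ss j)) ∧
    D.delta1 (c 1) a mb Sb (Ss 1)

/-- Long-form tree transition `q —(i,m)→ q'` reading `a` with `(Sb; Ss 1, …, Ss n)`. -/
def LongT (n : ℕ) (C : ASTCarrier Γ P) (D : ASTTrans Γ C) (q : C.Q) (i m : ℕ)
    (q' : C.Q) (a : Γ) (mb : ℕ) (Sb : Set C.SS) (Ss : ℕ → Set C.SS) : Prop :=
  ∃ σ : C.SS, D.deltaT q i m q' σ ∧ LongS C D n σ a mb Sb Ss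

/-- Partial long-form stack transition from order `khi` down to order `klo`:
`σ —σ'→ (Ss (klo+1), …, Ss khi)`. -/
def LongSK (C : ASTCarrier Γ P) (D : ASTTrans Γ C) (khi klo : ℕ) (σ σ' : C.SS)
    (Ss : ℕ → Set C.SS) : Prop :=
  ∃ c : ℕ → C.SS, c khi = σ ∧ c klo = σ' ∧
    ∀ j, klo + 1 ≤ j → j ≤ khi → D.deltaHi j (c j) (c (j - 1)) (Ss j)

/-- Partial long-form tree transition
`q —(i,m)→ q'` with `σ'` at order `k` and sets `(Ss (k+1), …, Ss n)`. -/
def LongTK (n : ℕ) (C : ASTCarrier Γ P) (D : ASTTrans Γ C) (q : C.Q) (i m : ℕ)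
    (q' : C.Q) (k : ℕ) (σ' : C.SS) (Ss : ℕ → Set C.SS) : Prop :=
  ∃ σ : C.SS, D.deltaT q i m q' σ ∧ LongSK C D n k σ σ' Ss

/-- Lift of an order-1 transition to a set of source states (targets are unioned,
all annotation sets being of the same order `mb`). -/
def Long1Set (C : ASTCarrier Γ P) (D : ASTTrans Γ C) (S₁ : Set C.SS) (a : Γ)
    (mb : ℕ) (Sb S : Set C.SS) : Prop :=
  ∃ fb fs : C.SS → Set C.SS,
    (∀ τ ∈ S₁, D.delta1 τ a mb (fb τ) (fs τ)) ∧
    Sb = ⋃ τ ∈ S₁, fb τ ∧ S = ⋃ τ ∈ S₁, fs τ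

/-- Lift of a long-form stack transition to a set of source states. -/
def LongSSet (C : ASTCarrier Γ P) (D : ASTTrans Γ C) (k : ℕ) (S : Set C.SS) (a : Γ)
    (mb : ℕ) (Sb : Set C.SS) (Ss : ℕ → Set C.SS) : Prop :=
  ∃ (fb : C.SS → Set C.SS) (fs : C.SS → ℕ → Set C.SS),
    (∀ τ ∈ S, LongS C D k τ a mb (fb τ) (fs τ)) ∧
    Sb = ⋃ τ ∈ S, fb τ ∧
    ∀ j, 1 ≤ j → j ≤ k → Ss j = ⋃ τ ∈ S, fs τ j

/-- A long-form transition to be added by saturation. -/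
structure LFT (Γ Q SS : Type) where
  src : Q
  idx : ℕ
  ar : ℕ
  tgt : Q
  ch : Γ
  mb : ℕ
  Sb : Set SS
  Ss : ℕ → Set SS

/-- The long-form transitions derived in one saturation step from the rules of
`G` and the long-form transitions present in `D`
(one case per kind of rewrite rule, as prescribed by the saturation algorithm). -/
inductive DerivedLF (n : ℕ) (G : GASTRS Γ P) (C : ASTCarrier Γ P) (D : ASTTrans Γ C) :
    LFT Γ C.Q C.SS → Prop where
  | rew {p : P} {a b : Γ} {p' : P} {q : C.Q} {i m : ℕ} {mb : ℕ}
      {Sb : Set C.SS} {Ss : ℕ → Set C.SS} :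
      TRule.op p (StackOp.rew a b) p' ∈ G.R →
      LongT n C D q i m (C.ι p') b mb Sb Ss →
      DerivedLF n G C D ⟨q, i, m, C.ι p, a, mb, Sb, Ss⟩
  | cpush {p : P} {k : ℕ} {p' : P} {q : C.Q} {i m : ℕ} {a : Γ}
      {Sb : Set C.SS} {Ss : ℕ → Set C.SS} {mb' : ℕ} {Sb' S₁' : Set C.SS} :
      TRule.op p (StackOp.cpush k) p' ∈ G.R → 1 ≤ k → k ≤ n →
      LongT n C D q i m (C.ι p') a k Sb Ss →
      Long1Set C D (Ss 1) a mb' Sb' S₁' →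
      DerivedLF n G C D ⟨q, i, m, C.ι p, a, mb', Sb',
        fun j => if j = 1 then (if k = 1 then S₁' ∪ Sb else S₁')
                 else if j = k then Ss k ∪ Sb else Ss j⟩
  | push {p : P} {k : ℕ} {p' : P} {q : C.Q} {i m : ℕ} {a : Γ} {mb : ℕ}
      {Sb Sb' : Set C.SS} {Ss Ss' : ℕ → Set C.SS} :
      TRule.op p (StackOp.push k) p' ∈ G.R → 2 ≤ k → k ≤ n →
      LongT n C D q i m (C.ι p') a mb Sb Ss →
      LongSSet C D k (Ss k) a mb Sb' Ss' →
      DerivedLF n G C D ⟨q, i, m, C.ι p, a, mb, Sb ∪ Sb',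
        fun j => if j < k then Ss j ∪ Ss' j else if j = k then Ss' k else Ss j⟩
  | pop {p : P} {k : ℕ} {p' : P} {q : C.Q} {i m : ℕ} {σk : C.SS}
      {Ss : ℕ → Set C.SS} (a : Γ) :
      TRule.op p (StackOp.pop k) p' ∈ G.R → 1 ≤ k → k ≤ n →
      LongTK n C D q i m (C.ι p') k σk Ss →
      DerivedLF n G C D ⟨q, i, m, C.ι p, a, 1, ∅,
        fun j => if j < k then ∅ else if j = k then {σk} else Ss j⟩
  | collapse {p : P} {k : ℕ} {p' : P} {q : C.Q} {i m : ℕ} {σk : C.SS}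
      {Ss : ℕ → Set C.SS} (a : Γ) :
      TRule.op p (StackOp.collapse k) p' ∈ G.R → 1 ≤ k → k ≤ n →
      LongTK n C D q i m (C.ι p') k σk Ss →
      DerivedLF n G C D ⟨q, i, m, C.ι p, a, k, {σk},
        fun j => if j ≤ k then ∅ else Ss j⟩
  | create {p : P} {ps : List P} {q q' : C.Q} {i m : ℕ} {a : Γ} {mb : ℕ}
      {Sb : Set C.SS} {Ss : ℕ → Set C.SS} {fb : ℕ → Set C.SS} {fs : ℕ → ℕ → Set C.SS} :
      TRule.create p ps ∈ G.R → ps ≠ [] →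
      LongT n C D q i m q' a mb Sb Ss →
      (∀ j (hj : j < ps.length),
        LongT n C D q' (j + 1) ps.length (C.ι (ps.get ⟨j, hj⟩)) a mb (fb j) (fs j)) →
      DerivedLF n G C D ⟨q, i, m, C.ι p, a, mb,
        Sb ∪ ⋃ j ∈ Finset.range ps.length, fb j,
        fun l => Ss l ∪ ⋃ j ∈ Finset.range ps.length, fs j l⟩
  | destroy {ps : List P} {p : P} (j : ℕ) (hj : j < ps.length) (a : Γ) :
      TRule.destroy ps p ∈ G.R →
      DerivedLF n G C D
        ⟨C.ι p, j + 1, ps.length, C.ι (ps.get ⟨j, hj⟩), a, 1, ∅, fun _ => ∅⟩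

/-- The canonical chain of fresh states realizing a derived long-form transition:
`lfChain … lf j` is the state at order `n - j`; the order-`n` state is determined
by the endpoints of the tree transition, and each lower state is determined by the
state and target set one order above (so that states and transitions between the
same endpoints are reused across derived transitions). -/
def lfChain {Q SS : Type} (newT : Q → ℕ → ℕ → Q → SS) (newHi : SS → Set SS → SS)
    (n : ℕ) (lf : LFT Γ Q SS) : ℕ → SS
  | 0 => newT lf.src lf.idx lf.ar lf.tgt
  | j + 1 => newHi (lfChain newT newHi n lf j) (lf.Ss (n - j))

/-- The fresh-state functions are injective, mutually disjoint, and avoid the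
states and accepting states of the original automaton. -/
structure FreshFor (C : ASTCarrier Γ P) (D₀ : ASTTrans Γ C)
    (newT : C.Q → ℕ → ℕ → C.Q → C.SS) (newHi : C.SS → Set C.SS → C.SS) : Prop where
  freshT : ∀ q i m q', newT q i m q' ∉ statesOf C D₀ ∧ ∀ k, newT q i m q' ∉ C.Fs k
  freshHi : ∀ σ S, newHi σ S ∉ statesOf C D₀ ∧ ∀ k, newHi σ S ∉ C.Fs k
  injT : ∀ q i m q' r j l r', newT q i m q' = newT r j l r' →
    q = r ∧ i = j ∧ m = l ∧ q' = r'
  injHi : ∀ σ S τ T, newHi σ S = newHi τ T → σ = τ ∧ S = T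
  disj : ∀ q i m q' σ S, newT q i m q' ≠ newHi σ S

/-- One step `Π` of the saturation algorithm: add to `D` the transitions
realizing (via the canonical fresh states) every long-form transition derived
from the rules of `G` and the current transitions. -/
def satStep (n : ℕ) (G : GASTRS Γ P) (C : ASTCarrier Γ P)
    (newT : C.Q → ℕ → ℕ → C.Q → C.SS) (newHi : C.SS → Set C.SS → C.SS)
    (D : ASTTrans Γ C) : ASTTrans Γ C where
  deltaT := fun q i m q' σ => D.deltaT q i m q' σ ∨
    ∃ lf : LFT Γ C.Q C.SS, DerivedLF n G C D lf ∧
      q = lf.src ∧ i = lf.idx ∧ m = lf.ar ∧ q' = lf.tgt ∧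
      σ = lfChain newT newHi n lf 0
  deltaHi := fun k σ σ' S => D.deltaHi k σ σ' S ∨
    ∃ lf : LFT Γ C.Q C.SS, DerivedLF n G C D lf ∧ 2 ≤ k ∧ k ≤ n ∧
      σ = lfChain newT newHi n lf (n - k) ∧
      σ' = lfChain newT newHi n lf (n - k + 1) ∧ S = lf.Ss k
  delta1 := fun σ a mb Sb S => D.delta1 σ a mb Sb S ∨
    ∃ lf : LFT Γ C.Q C.SS, DerivedLF n G C D lf ∧ 1 ≤ n ∧
      σ = lfChain newT newHi n lf (n - 1) ∧
      a = lf.ch ∧ mb = lf.mb ∧ Sb = lf.Sb ∧ S = lf.Ss 1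

/-- The saturation sequence `A₀, Π(A₀), Π²(A₀), …`. -/
def satIter (n : ℕ) (G : GASTRS Γ P) (C : ASTCarrier Γ P)
    (newT : C.Q → ℕ → ℕ → C.Q → C.SS) (newHi : C.SS → Set C.SS → C.SS)
    (D₀ : ASTTrans Γ C) (i : ℕ) : ASTTrans Γ C :=
  (satStep n G C newT newHi)^[i] D₀
/-! ## Meanings of states and soundness (for the correctness of saturation) -/

variable {Γ P : Type}

/-- Update a partial node-to-state map at position `v`. -/
def updEnv {Q : Type} (η : List ℕ → Option Q) (v : List ℕ) (q : Q) :
    List ℕ → Option Q :=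
  fun w => if w = v then some q else η w

/-- `AttachAt t v pairs t'`: `t'` is obtained from `t` by replacing the leaf at
position `v` (labelled `(q₀, s₀)`) by an internal node labelled `s₀` whose
children are new leaves labelled by `pairs`. -/
def AttachAt {L : Type} {n : ℕ} (t : STree Γ L n) (v : List ℕ)
    (pairs : List (L × AnnStack Γ n n)) (t' : STree Γ L n) : Prop :=
  ∃ (q₀ : L) (s₀ : AnnStack Γ n n),
    STree.subtreeAt t v = some (STree.leaf q₀ s₀) ∧
    STree.replaceAt t v
      (STree.node s₀ (pairs.map fun pr => STree.leaf pr.1 pr.2)) = some t'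

/-- The meaning `t ⊨_η qs` of tree-automaton states, w.r.t. the system `G` and
the initial automaton `(C, D₀)`: the extended tree `t`, whose leaf state
sequence is `qs`, can be rewritten by `G` to a tree `t'` accepted by `(C, D₀)`
in the extended sense, such that for every node `v` with `η v = some q`:
if `q` is a control state then `v` appears as a leaf during the rewrite
sequence and carries `q` on the first tree in which it is a leaf;
if `q` is not a control state then `v` is never a leaf and the accepting
run labels `v` by `q`. -/
def Models (n : ℕ) (G : GASTRS Γ P) (C : ASTCarrier Γ P) (D₀ : ASTTrans Γ C)
    (η : List ℕ → Option C.Q) (t : STree Γ C.Q n) (qs : List C.Q) : Prop :=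
  STree.LeavesAre t qs ∧
  ∃ (ts : List (STree Γ C.Q n)) (t' : STree Γ C.Q n) (ρ : List ℕ → C.Q),
    ts.head? = some t ∧ ts.getLast? = some t' ∧ List.Chain' (StepI G C.ι) ts ∧
    IsRun n C D₀ id t' ρ ∧ RootAcc n C D₀ t' ρ ∧
    ∀ (v : List ℕ) (q : C.Q), η v = some q →
      ((q ∈ Set.range C.ι →
          ∃ i, ∃ hi : i < ts.length,
            (∀ j (hj : j < i), ¬ STree.HasLeafAt (ts.get ⟨j, by omega⟩) v) ∧
            STree.LeafLabelAt (ts.get ⟨i, hi⟩) v q) ∧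
       (q ∉ Set.range C.ι →
          (∀ i (hi : i < ts.length), ¬ STree.HasLeafAt (ts.get ⟨i, hi⟩) v) ∧
          (∃ sub, STree.subtreeAt t' v = some sub) ∧ ρ v = q))

/-- The defining condition for the meaning of an order-`n` stack state labelling
the tree transition `q —(i,m)→ q'`, applied to a stack `s` (item 3 of the
definition of `⊨` in the paper): for every tree `t ⊨_η ū₁, q, ū₂`, every family
of transitions `q —(l,m),σ_l→ q_l` and stacks `s₁, …, s_m` such that extending
`t` at the designated leaf by the children `(q_1,s_1), …, (q_m,s_m)` satisfies
`⊨`, replacing the `i`-th new child by `(q', s)` again satisfies `⊨`. -/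
def BigCond (n : ℕ) (G : GASTRS Γ P) (C : ASTCarrier Γ P) (D D₀ : ASTTrans Γ C)
    (q : C.Q) (i m : ℕ) (q' : C.Q) (s : AnnStack Γ n n) : Prop :=
  ∀ (qs₁ qs₂ : List C.Q) (η : List ℕ → Option C.Q) (t : STree Γ C.Q n)
    (vs : List (List ℕ)) (v : List ℕ) (qsm : List C.Q)
    (ss : List (AnnStack Γ n n)) (σs : ℕ → C.SS) (t₂ t₃ : STree Γ C.Q n),
    Models n G C D₀ η t (qs₁ ++ q :: qs₂) →
    STree.LeafPosList t vs → vs[qs₁.length]? = some v →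
    qsm.length = m → ss.length = m →
    (∀ l, l < m → D.deltaT q (l + 1) m (qsm.getD l q) (σs l)) →
    AttachAt t v (qsm.zip ss) t₂ →
    Models n G C D₀ (updEnv η v q) t₂ (qs₁ ++ qsm ++ qs₂) →
    1 ≤ i → i ≤ m →
    AttachAt t v ((qsm.zip ss).set (i - 1) (q', s)) t₃ →
    Models n G C D₀ (updEnv η v q) t₃ (qs₁ ++ qsm.set (i - 1) q' ++ qs₂)

/-- The meaning `s ⊨ σ` of stack-automaton states of the automaton `(C, D)`
w.r.t. `G` and the initial automaton `(C, D₀)`: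
non-initial states mean the stacks they accept; an initial state of order
`k < n` labelling a transition `σ_{k+1} —σ→ S` means all stacks `s` such that
`s :_{k+1} s' ⊨ σ_{k+1}` whenever `s' ⊨ S`; an initial order-`n` state
labelling a tree transition means the tree condition `BigCond`. -/
def SModels (n : ℕ) (G : GASTRS Γ P) (C : ASTCarrier Γ P) (D D₀ : ASTTrans Γ C)
    (k : ℕ) (σ : C.SS) (s : AnnStack Γ n k) : Prop :=
  (∀ _hkn : k < n,
    (HiLabel C D σ →
      ∀ (τ : C.SS) (S : Set C.SS), D.deltaHi (k + 1) τ σ S →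
        ∀ (hk1 : 1 ≤ k) (s' : AnnStack Γ n (k + 1)),
          (∀ υ ∈ S, SModels n G C D D₀ (k + 1) υ s') →
          SModels n G C D D₀ (k + 1) τ (AnnStack.consK hk1 s s')) ∧
    (¬ HiLabel C D σ → SAcc n C D k σ s)) ∧
  (∀ _hkn : ¬ k < n,
    (TreeLabel C D σ →
      ∀ (h : k = n) (q : C.Q) (i m : ℕ) (q' : C.Q), D.deltaT q i m q' σ →
        BigCond n G C D D₀ q i m q' (cast (congrArg (AnnStack Γ n) h) s)) ∧
    (¬ TreeLabel C D σ → SAcc n C D k σ s))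
termination_by n - k
decreasing_by all_goals omega

/-- `buildStack a sb f k` is the order-`k` stack
`⟨a, sb⟩ :₁ f 1 :₂ f 2 :₃ ⋯ :_k f k`. -/
def buildStack {n : ℕ} (a : Γ) {mb : ℕ} (hm : 1 ≤ mb) (hmn : mb ≤ n)
    (sb : AnnStack Γ n mb) (f : (j : ℕ) → AnnStack Γ n j) :
    (k : ℕ) → AnnStack Γ n k
  | 0 => AnnStack.nil 0
  | 1 => AnnStack.cons1 a hm hmn sb (f 1)
  | j + 2 => AnnStack.consK (Nat.succ_le_succ (Nat.zero_le j))
      (buildStack a hm hmn sb f (j + 1)) (f (j + 2))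

/-- Soundness of a long-form stack transition `σ —a,Sb→ (Ss 1, …, Ss k)`:
whenever `s_j ⊨ Ss j` for all `j ≤ k` and `sb ⊨ Sb`, the composed stack
`⟨a,sb⟩ :₁ s₁ :₂ ⋯ :_k s_k` satisfies `⊨ σ`. -/
def SoundS (n : ℕ) (G : GASTRS Γ P) (C : ASTCarrier Γ P) (D D₀ : ASTTrans Γ C)
    (k : ℕ) (σ : C.SS) (a : Γ) (mb : ℕ) (Sb : Set C.SS) (Ss : ℕ → Set C.SS) : Prop :=
  ∀ (hm : 1 ≤ mb) (hmn : mb ≤ n) (sb : AnnStack Γ n mb)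
    (f : (j : ℕ) → AnnStack Γ n j),
    (∀ τ ∈ Sb, SModels n G C D D₀ mb τ sb) →
    (∀ j, 1 ≤ j → j ≤ k → ∀ τ ∈ Ss j, SModels n G C D D₀ j τ (f j)) →
    SModels n G C D D₀ k σ (buildStack a hm hmn sb f k)

/-- Soundness of a long-form tree transition `q —(i,m)→ q'` reading `a` with
`(Sb; Ss 1, …, Ss n)`. -/
def SoundT (n : ℕ) (G : GASTRS Γ P) (C : ASTCarrier Γ P) (D D₀ : ASTTrans Γ C)
    (q : C.Q) (i m : ℕ) (q' : C.Q) (a : Γ) (mb : ℕ) (Sb : Set C.SS)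
    (Ss : ℕ → Set C.SS) : Prop :=
  ∀ (hm : 1 ≤ mb) (hmn : mb ≤ n) (sb : AnnStack Γ n mb)
    (f : (j : ℕ) → AnnStack Γ n j),
    (∀ τ ∈ Sb, SModels n G C D D₀ mb τ sb) →
    (∀ j, 1 ≤ j → j ≤ n → ∀ τ ∈ Ss j, SModels n G C D D₀ j τ (f j)) →
    BigCond n G C D D₀ q i m q' (buildStack a hm hmn sb f n)

/-- `D` is obtained from `D₀` by adding only new initial stack states and
transitions starting at initial states (new tree transitions target control
states and are labelled by new states; new stack transitions start at new states). -/
def ExtendsInit (C : ASTCarrier Γ P) (D₀ D : ASTTrans Γ C) : Prop :=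
  (∀ q i m q' σ, D₀.deltaT q i m q' σ → D.deltaT q i m q' σ) ∧
  (∀ k σ σ' S, D₀.deltaHi k σ σ' S → D.deltaHi k σ σ' S) ∧
  (∀ σ a mb Sb S, D₀.delta1 σ a mb Sb S → D.delta1 σ a mb Sb S) ∧
  (∀ q i m q' σ, D.deltaT q i m q' σ →
    D₀.deltaT q i m q' σ ∨ ((∃ p : P, q' = C.ι p) ∧ σ ∉ statesOf C D₀)) ∧
  (∀ k σ σ' S, D.deltaHi k σ σ' S → D₀.deltaHi k σ σ' S ∨ σ ∉ statesOf C D₀) ∧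
  (∀ σ a mb Sb S, D.delta1 σ a mb Sb S → D₀.delta1 σ a mb Sb S ∨ σ ∉ statesOf C D₀)

/-- Non-redundancy: every tree state with incoming transitions admits a family
of transitions which can be realized by suitable stacks extending any tree
satisfying `⊨` at a designated leaf. -/
def NonRedundant (n : ℕ) (G : GASTRS Γ P) (C : ASTCarrier Γ P)
    (D D₀ : ASTTrans Γ C) : Prop :=
  ∀ q : C.Q, (∃ q₀ i m σ, D.deltaT q₀ i m q σ) →
    ∃ (m : ℕ) (qsm : List C.Q) (σs : ℕ → C.SS), qsm.length = m ∧ 1 ≤ m ∧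
      (∀ l, l < m → D.deltaT q (l + 1) m (qsm.getD l q) (σs l)) ∧
      ∀ (qs₁ qs₂ : List C.Q) (η : List ℕ → Option C.Q) (t : STree Γ C.Q n)
        (vs : List (List ℕ)) (v : List ℕ),
        Models n G C D₀ η t (qs₁ ++ q :: qs₂) →
        STree.LeafPosList t vs → vs[qs₁.length]? = some v →
        ∃ (ss : List (AnnStack Γ n n)) (t₂ : STree Γ C.Q n), ss.length = m ∧
          AttachAt t v (qsm.zip ss) t₂ ∧
          Models n G C D₀ (updEnv η v q) t₂ (qs₁ ++ qsm ++ qs₂)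

/-- All long-form transitions of `D` are sound. -/
def AllSound (n : ℕ) (G : GASTRS Γ P) (C : ASTCarrier Γ P)
    (D₀ D : ASTTrans Γ C) : Prop :=
  (∀ q i m q' a mb Sb Ss, LongT n C D q i m q' a mb Sb Ss →
     SoundT n G C D D₀ q i m q' a mb Sb Ss) ∧
  (∀ k σ a mb Sb Ss, 1 ≤ k → k ≤ n → LongS C D k σ a mb Sb Ss →
     SoundS n G C D D₀ k σ a mb Sb Ss)

/-- A sound annotated stack tree automaton (w.r.t. `G` and the initial
automaton `(C, D₀)`). -/
def SoundAut (n : ℕ) (G : GASTRS Γ P) (C : ASTCarrier Γ P)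
    (D₀ D : ASTTrans Γ C) : Prop :=
  ExtendsInit C D₀ D ∧ AllSound n G C D₀ D ∧ NonRedundant n G C D D₀

/-! ## GASTRS with global state and context-bounded reachability -/

/-- An order-`n` GASTRS with global state: operations are guarded by a pair of
global states. -/
structure GGASTRS (Γ P GS : Type) where
  R : Set (GS × TRule Γ P × GS)
  finR : R.Finite

/-- The GASTRS with the single rule `r`. -/
def singletonG (r : TRule Γ P) : GASTRS Γ P :=
  ⟨{r}, Set.finite_singleton r⟩

/-- `GReach H c c' m`: there is a run from configuration `c` to configuration
`c'` with exactly `m` global-state-changing transitions. -/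
inductive GReach {GS : Type} {n : ℕ} (H : GGASTRS Γ P GS) :
    GS × STree Γ P n → GS × STree Γ P n → ℕ → Prop where
  | refl (c : GS × STree Γ P n) : GReach H c c 0
  | stepSame {g : GS} {r : TRule Γ P} {t t' : STree Γ P n}
      {c : GS × STree Γ P n} {m : ℕ} :
      (g, r, g) ∈ H.R → StepI (singletonG r) id t t' →
      GReach H (g, t') c m → GReach H (g, t) c m
  | stepChange {g g' : GS} {r : TRule Γ P} {t t' : STree Γ P n}
      {c : GS × STree Γ P n} {m : ℕ} :
      (g, r, g') ∈ H.R → g ≠ g' → StepI (singletonG r) id t t' →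
      GReach H (g', t') c m → GReach H (g, t) c (m + 1)

/-!
The intersection automaton runs both automata side by side. Its tree states are pairs; its
stack states are pairs `pair σ₁ σ₂`, reading a stack in both automata at once, or single
states `left σ₁`, `right σ₂` of one of them. A transition from a pair reads the topmost
substack from a pair and the remainder from the disjoint union `lift S₁ S₂` of the two
remainder sets (the product `S₁ ×ˢ S₂` would drop the obligations of one side whenever the
other set is empty). Hence a stack is accepted from `pair σ₁ σ₂` iff it is accepted from `σ₁`
and from `σ₂`, and runs of the intersection automaton are exactly pairs of runs.
-/

lemma mem_statesOf_of_deltaHi {C : ASTCarrier Γ P} {D : ASTTrans Γ C} {k : ℕ} {σ σ' : C.SS}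
    {S : Set C.SS} (h : D.deltaHi k σ σ' S) :
    σ ∈ statesOf C D ∧ σ' ∈ statesOf C D ∧ S ⊆ statesOf C D :=
  ⟨Or.inr (Or.inl ⟨_, _, _, h⟩), Or.inr (Or.inr (Or.inl ⟨_, _, _, h⟩)),
    fun _ hυ => Or.inr (Or.inr (Or.inr (Or.inl ⟨_, _, _, _, h, hυ⟩)))⟩

lemma mem_statesOf_of_delta1 {C : ASTCarrier Γ P} {D : ASTTrans Γ C} {σ : C.SS} {a : Γ}
    {mb : ℕ} {Sb S : Set C.SS} (h : D.delta1 σ a mb Sb S) :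
    σ ∈ statesOf C D ∧ Sb ⊆ statesOf C D ∧ S ⊆ statesOf C D :=
  ⟨Or.inr (Or.inr (Or.inr (Or.inr (Or.inl ⟨_, _, _, _, h⟩)))),
    fun _ hυ => Or.inr (Or.inr (Or.inr (Or.inr (Or.inr ⟨_, _, _, _, _, h, Or.inl hυ⟩)))),
    fun _ hυ => Or.inr (Or.inr (Or.inr (Or.inr (Or.inr ⟨_, _, _, _, _, h, Or.inr hυ⟩))))⟩

lemma mem_statesOf_of_deltaT {C : ASTCarrier Γ P} {D : ASTTrans Γ C} {q q' : C.Q} {i m : ℕ}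
    {σ : C.SS} (h : D.deltaT q i m q' σ) : σ ∈ statesOf C D :=
  Or.inl ⟨_, _, _, _, h⟩

inductive InterState (S₁ S₂ : Type) where
  | pair : S₁ → S₂ → InterState S₁ S₂
  | left : S₁ → InterState S₁ S₂
  | right : S₂ → InterState S₁ S₂

namespace InterState

variable {S₁ S₂ : Type}

def Within (A₁ : Set S₁) (A₂ : Set S₂) : Set (InterState S₁ S₂)
  | pair σ₁ σ₂ => σ₁ ∈ A₁ ∧ σ₂ ∈ A₂
  | left σ₁ => σ₁ ∈ A₁
  | right σ₂ => σ₂ ∈ A₂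

def lift (A₁ : Set S₁) (A₂ : Set S₂) : Set (InterState S₁ S₂) :=
  left '' A₁ ∪ right '' A₂

variable {A₁ B₁ : Set S₁} {A₂ B₂ : Set S₂}

lemma lift_subset_within_iff : lift B₁ B₂ ⊆ Within A₁ A₂ ↔ B₁ ⊆ A₁ ∧ B₂ ⊆ A₂ := by
  simp only [lift, Set.union_subset_iff, Set.image_subset_iff]
  rfl

lemma finite_within (h₁ : A₁.Finite) (h₂ : A₂.Finite) : (Within A₁ A₂).Finite := by
  refine (((h₁.prod h₂).image fun p => pair p.1 p.2).union ((h₁.image left).union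
    (h₂.image right))).subset ?_
  rintro (⟨σ₁, σ₂⟩ | σ₁ | σ₂) hσ
  · exact Or.inl ⟨(σ₁, σ₂), hσ, rfl⟩
  · exact Or.inr (Or.inl ⟨σ₁, hσ, rfl⟩)
  · exact Or.inr (Or.inr ⟨σ₂, hσ, rfl⟩)

end InterState

open InterState

def interCarrier (C₁ C₂ : ASTCarrier Γ P) : ASTCarrier Γ P where
  Q := C₁.Q × C₂.Q
  ι p := (C₁.ι p, C₂.ι p)
  ι_inj _ _ h := C₁.ι_inj (congrArg Prod.fst h)
  F := C₁.F ×ˢ C₂.F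
  SS := InterState C₁.SS C₂.SS
  Fs k := Within (C₁.Fs k) (C₂.Fs k)

def interTrans {C₁ C₂ : ASTCarrier Γ P} (D₁ : ASTTrans Γ C₁) (D₂ : ASTTrans Γ C₂) :
    ASTTrans Γ (interCarrier C₁ C₂) where
  deltaT q i m q' σ := ∃ σ₁ σ₂, σ = pair σ₁ σ₂ ∧
    D₁.deltaT q.1 i m q'.1 σ₁ ∧ D₂.deltaT q.2 i m q'.2 σ₂
  deltaHi k σ σ' S :=
    (∃ τ τ' S₁, σ = left τ ∧ σ' = left τ' ∧ S = left '' S₁ ∧ D₁.deltaHi k τ τ' S₁) ∨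
    (∃ τ τ' S₂, σ = right τ ∧ σ' = right τ' ∧ S = right '' S₂ ∧ D₂.deltaHi k τ τ' S₂) ∨
    (∃ σ₁ σ₂ σ₁' σ₂' S₁ S₂, σ = pair σ₁ σ₂ ∧ σ' = pair σ₁' σ₂' ∧ S = lift S₁ S₂ ∧
      D₁.deltaHi k σ₁ σ₁' S₁ ∧ D₂.deltaHi k σ₂ σ₂' S₂)
  delta1 σ a mb Sb S :=
    (∃ τ Sb₁ S₁, σ = left τ ∧ Sb = left '' Sb₁ ∧ S = left '' S₁ ∧ D₁.delta1 τ a mb Sb₁ S₁) ∨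
    (∃ τ Sb₂ S₂, σ = right τ ∧ Sb = right '' Sb₂ ∧ S = right '' S₂ ∧ D₂.delta1 τ a mb Sb₂ S₂) ∨
    (∃ σ₁ σ₂ Sb₁ Sb₂ S₁ S₂, σ = pair σ₁ σ₂ ∧ Sb = lift Sb₁ Sb₂ ∧ S = lift S₁ S₂ ∧
      D₁.delta1 σ₁ a mb Sb₁ S₁ ∧ D₂.delta1 σ₂ a mb Sb₂ S₂)

section

variable {C₁ C₂ : ASTCarrier Γ P} {D₁ : ASTTrans Γ C₁} {D₂ : ASTTrans Γ C₂}

lemma within_statesOf_of_deltaHi_interTrans {k : ℕ} {σ σ' : InterState C₁.SS C₂.SS}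
    {S : Set (InterState C₁.SS C₂.SS)} (h : (interTrans D₁ D₂).deltaHi k σ σ' S) :
    σ ∈ Within (statesOf C₁ D₁) (statesOf C₂ D₂) ∧
      σ' ∈ Within (statesOf C₁ D₁) (statesOf C₂ D₂) ∧
      S ⊆ Within (statesOf C₁ D₁) (statesOf C₂ D₂) := by
  rcases h with ⟨τ, τ', S₁, rfl, rfl, rfl, h⟩ | ⟨τ, τ', S₂, rfl, rfl, rfl, h⟩ |
    ⟨σ₁, σ₂, σ₁', σ₂', S₁, S₂, rfl, rfl, rfl, h₁, h₂⟩
  · exact ⟨(mem_statesOf_of_deltaHi h).1, (mem_statesOf_of_deltaHi h).2.1,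
      Set.image_subset_iff.2 (mem_statesOf_of_deltaHi h).2.2⟩
  · exact ⟨(mem_statesOf_of_deltaHi h).1, (mem_statesOf_of_deltaHi h).2.1,
      Set.image_subset_iff.2 (mem_statesOf_of_deltaHi h).2.2⟩
  · obtain ⟨hσ₁, hσ₁', hS₁⟩ := mem_statesOf_of_deltaHi h₁
    obtain ⟨hσ₂, hσ₂', hS₂⟩ := mem_statesOf_of_deltaHi h₂
    exact ⟨⟨hσ₁, hσ₂⟩, ⟨hσ₁', hσ₂'⟩, lift_subset_within_iff.2 ⟨hS₁, hS₂⟩⟩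

lemma within_statesOf_of_delta1_interTrans {σ : InterState C₁.SS C₂.SS} {a : Γ} {mb : ℕ}
    {Sb S : Set (InterState C₁.SS C₂.SS)} (h : (interTrans D₁ D₂).delta1 σ a mb Sb S) :
    σ ∈ Within (statesOf C₁ D₁) (statesOf C₂ D₂) ∧
      Sb ⊆ Within (statesOf C₁ D₁) (statesOf C₂ D₂) ∧
      S ⊆ Within (statesOf C₁ D₁) (statesOf C₂ D₂) := by
  rcases h with ⟨τ, Sb₁, S₁, rfl, rfl, rfl, h⟩ | ⟨τ, Sb₂, S₂, rfl, rfl, rfl, h⟩ |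
    ⟨σ₁, σ₂, Sb₁, Sb₂, S₁, S₂, rfl, rfl, rfl, h₁, h₂⟩
  · exact ⟨(mem_statesOf_of_delta1 h).1, Set.image_subset_iff.2 (mem_statesOf_of_delta1 h).2.1,
      Set.image_subset_iff.2 (mem_statesOf_of_delta1 h).2.2⟩
  · exact ⟨(mem_statesOf_of_delta1 h).1, Set.image_subset_iff.2 (mem_statesOf_of_delta1 h).2.1,
      Set.image_subset_iff.2 (mem_statesOf_of_delta1 h).2.2⟩
  · obtain ⟨hσ₁, hSb₁, hS₁⟩ := mem_statesOf_of_delta1 h₁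
    obtain ⟨hσ₂, hSb₂, hS₂⟩ := mem_statesOf_of_delta1 h₂
    exact ⟨⟨hσ₁, hσ₂⟩, lift_subset_within_iff.2 ⟨hSb₁, hSb₂⟩,
      lift_subset_within_iff.2 ⟨hS₁, hS₂⟩⟩

lemma statesOf_interTrans_subset :
    statesOf (interCarrier C₁ C₂) (interTrans D₁ D₂) ⊆
      Within (statesOf C₁ D₁) (statesOf C₂ D₂) := by
  rintro σ (⟨q, i, m, q', σ₁, σ₂, rfl, h₁, h₂⟩ | ⟨k, σ', S, h⟩ | ⟨k, τ, S, h⟩ |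
    ⟨k, τ, σ', S, h, hσ⟩ | ⟨a, mb, Sb, S, h⟩ | ⟨τ, a, mb, Sb, S, h, hσ | hσ⟩)
  · exact ⟨mem_statesOf_of_deltaT h₁, mem_statesOf_of_deltaT h₂⟩
  · exact (within_statesOf_of_deltaHi_interTrans h).1
  · exact (within_statesOf_of_deltaHi_interTrans h).2.1
  · exact (within_statesOf_of_deltaHi_interTrans h).2.2 hσ
  · exact (within_statesOf_of_delta1_interTrans h).1
  · exact (within_statesOf_of_delta1_interTrans h).2.1 hσ
  · exact (within_statesOf_of_delta1_interTrans h).2.2 hσ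

lemma finiteAut_interTrans (h₁ : FiniteAut C₁ D₁) (h₂ : FiniteAut C₂ D₂) :
    FiniteAut (interCarrier C₁ C₂) (interTrans D₁ D₂) := by
  obtain ⟨hQ₁, hS₁, hF₁⟩ := h₁
  obtain ⟨hQ₂, hS₂, hF₂⟩ := h₂
  exact ⟨inferInstanceAs (Finite (C₁.Q × C₂.Q)),
    (finite_within hS₁ hS₂).subset statesOf_interTrans_subset,
    fun k => finite_within (hF₁ k) (hF₂ k)⟩

variable {n : ℕ}

lemma mem_within_of_sacc_interTrans {k : ℕ} {σ : (interCarrier C₁ C₂).SS} {s : AnnStack Γ n k}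
    (h : SAcc n (interCarrier C₁ C₂) (interTrans D₁ D₂) k σ s) :
    σ ∈ Within {τ | SAcc n C₁ D₁ k τ s} {τ | SAcc n C₂ D₂ k τ s} := by
  induction h with
  | @nil _ σ hσ =>
    rcases σ with ⟨σ₁, σ₂⟩ | σ₁ | σ₂
    · exact ⟨SAcc.nil hσ.1, SAcc.nil hσ.2⟩
    · exact SAcc.nil hσ
    · exact SAcc.nil hσ
  | consK hk hδ _ _ ihhd ihtl =>
    rcases hδ with ⟨τ, τ', S₁, rfl, rfl, rfl, hδ⟩ | ⟨τ, τ', S₂, rfl, rfl, rfl, hδ⟩ |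
      ⟨σ₁, σ₂, σ₁', σ₂', S₁, S₂, rfl, rfl, rfl, hδ₁, hδ₂⟩
    · exact SAcc.consK hk hδ ihhd fun υ hυ => ihtl _ ⟨υ, hυ, rfl⟩
    · exact SAcc.consK hk hδ ihhd fun υ hυ => ihtl _ ⟨υ, hυ, rfl⟩
    · exact ⟨SAcc.consK hk hδ₁ ihhd.1 fun υ hυ => ihtl _ (Or.inl ⟨υ, hυ, rfl⟩),
        SAcc.consK hk hδ₂ ihhd.2 fun υ hυ => ihtl _ (Or.inr ⟨υ, hυ, rfl⟩)⟩
  | cons1 a hm hmn hδ _ _ ihann ihtl =>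
    rcases hδ with ⟨τ, Sb₁, S₁, rfl, rfl, rfl, hδ⟩ | ⟨τ, Sb₂, S₂, rfl, rfl, rfl, hδ⟩ |
      ⟨σ₁, σ₂, Sb₁, Sb₂, S₁, S₂, rfl, rfl, rfl, hδ₁, hδ₂⟩
    · exact SAcc.cons1 a hm hmn hδ (fun υ hυ => ihann _ ⟨υ, hυ, rfl⟩)
        fun υ hυ => ihtl _ ⟨υ, hυ, rfl⟩
    · exact SAcc.cons1 a hm hmn hδ (fun υ hυ => ihann _ ⟨υ, hυ, rfl⟩)
        fun υ hυ => ihtl _ ⟨υ, hυ, rfl⟩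
    · exact ⟨SAcc.cons1 a hm hmn hδ₁ (fun υ hυ => ihann _ (Or.inl ⟨υ, hυ, rfl⟩))
          fun υ hυ => ihtl _ (Or.inl ⟨υ, hυ, rfl⟩),
        SAcc.cons1 a hm hmn hδ₂ (fun υ hυ => ihann _ (Or.inr ⟨υ, hυ, rfl⟩))
          fun υ hυ => ihtl _ (Or.inr ⟨υ, hυ, rfl⟩)⟩

lemma sacc_interTrans_left {k : ℕ} {σ : C₁.SS} {s : AnnStack Γ n k}
    (h : SAcc n C₁ D₁ k σ s) :
    SAcc n (interCarrier C₁ C₂) (interTrans D₁ D₂) k (left σ) s := by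
  induction h with
  | nil hσ => exact SAcc.nil hσ
  | consK hk hδ _ _ ihhd ihtl =>
    exact SAcc.consK hk (Or.inl ⟨_, _, _, rfl, rfl, rfl, hδ⟩) ihhd
      (Set.forall_mem_image.2 ihtl)
  | cons1 a hm hmn hδ _ _ ihann ihtl =>
    exact SAcc.cons1 a hm hmn (Or.inl ⟨_, _, _, rfl, rfl, rfl, hδ⟩)
      (Set.forall_mem_image.2 ihann) (Set.forall_mem_image.2 ihtl)

lemma sacc_interTrans_right {k : ℕ} {σ : C₂.SS} {s : AnnStack Γ n k}
    (h : SAcc n C₂ D₂ k σ s) :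
    SAcc n (interCarrier C₁ C₂) (interTrans D₁ D₂) k (right σ) s := by
  induction h with
  | nil hσ => exact SAcc.nil hσ
  | consK hk hδ _ _ ihhd ihtl =>
    exact SAcc.consK hk (Or.inr (Or.inl ⟨_, _, _, rfl, rfl, rfl, hδ⟩)) ihhd
      (Set.forall_mem_image.2 ihtl)
  | cons1 a hm hmn hδ _ _ ihann ihtl =>
    exact SAcc.cons1 a hm hmn (Or.inr (Or.inl ⟨_, _, _, rfl, rfl, rfl, hδ⟩))
      (Set.forall_mem_image.2 ihann) (Set.forall_mem_image.2 ihtl)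

lemma sacc_interTrans_lift {k : ℕ} {S₁ : Set C₁.SS} {S₂ : Set C₂.SS} {s : AnnStack Γ n k}
    (h₁ : ∀ τ ∈ S₁, SAcc n C₁ D₁ k τ s) (h₂ : ∀ τ ∈ S₂, SAcc n C₂ D₂ k τ s) :
    ∀ υ ∈ lift S₁ S₂, SAcc n (interCarrier C₁ C₂) (interTrans D₁ D₂) k υ s := by
  rintro _ (⟨τ, hτ, rfl⟩ | ⟨τ, hτ, rfl⟩)
  · exact sacc_interTrans_left (h₁ τ hτ)
  · exact sacc_interTrans_right (h₂ τ hτ)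

lemma sacc_interTrans_pair {k : ℕ} {σ₁ : C₁.SS} {σ₂ : C₂.SS} {s : AnnStack Γ n k}
    (h₁ : SAcc n C₁ D₁ k σ₁ s) (h₂ : SAcc n C₂ D₂ k σ₂ s) :
    SAcc n (interCarrier C₁ C₂) (interTrans D₁ D₂) k (pair σ₁ σ₂) s := by
  induction h₁ generalizing σ₂ with
  | nil hσ₁ =>
    cases h₂ with
    | nil hσ₂ => exact SAcc.nil ⟨hσ₁, hσ₂⟩
  | consK hk hδ₁ _ htl₁ ihhd _ =>
    cases h₂ with
    | consK _ hδ₂ hhd₂ htl₂ =>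
      exact SAcc.consK hk (Or.inr (Or.inr ⟨_, _, _, _, _, _, rfl, rfl, rfl, hδ₁, hδ₂⟩))
        (ihhd hhd₂) (sacc_interTrans_lift htl₁ htl₂)
  | cons1 a hm hmn hδ₁ hann₁ htl₁ =>
    cases h₂ with
    | cons1 _ _ _ hδ₂ hann₂ htl₂ =>
      exact SAcc.cons1 a hm hmn (Or.inr (Or.inr ⟨_, _, _, _, _, _, rfl, rfl, rfl, hδ₁, hδ₂⟩))
        (sacc_interTrans_lift hann₁ hann₂) (sacc_interTrans_lift htl₁ htl₂)

lemma sacc_interTrans_iff {k : ℕ} {σ : InterState C₁.SS C₂.SS} {s : AnnStack Γ n k} :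
    SAcc n (interCarrier C₁ C₂) (interTrans D₁ D₂) k σ s ↔
      σ ∈ Within {τ | SAcc n C₁ D₁ k τ s} {τ | SAcc n C₂ D₂ k τ s} := by
  refine ⟨mem_within_of_sacc_interTrans, fun h => ?_⟩
  rcases σ with ⟨σ₁, σ₂⟩ | σ₁ | σ₂
  · exact sacc_interTrans_pair h.1 h.2
  · exact sacc_interTrans_left h
  · exact sacc_interTrans_right h

lemma exists_deltaT_interTrans_iff {q q' : C₁.Q × C₂.Q} {i m k : ℕ} {s : AnnStack Γ n k} :
    (∃ σ, (interTrans D₁ D₂).deltaT q i m q' σ ∧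
        SAcc n (interCarrier C₁ C₂) (interTrans D₁ D₂) k σ s) ↔
      (∃ σ₁, D₁.deltaT q.1 i m q'.1 σ₁ ∧ SAcc n C₁ D₁ k σ₁ s) ∧
        ∃ σ₂, D₂.deltaT q.2 i m q'.2 σ₂ ∧ SAcc n C₂ D₂ k σ₂ s := by
  constructor
  · rintro ⟨_, ⟨σ₁, σ₂, rfl, hδ₁, hδ₂⟩, hacc⟩
    exact ⟨⟨σ₁, hδ₁, (sacc_interTrans_iff.1 hacc).1⟩, ⟨σ₂, hδ₂, (sacc_interTrans_iff.1 hacc).2⟩⟩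
  · rintro ⟨⟨σ₁, hδ₁, hacc₁⟩, ⟨σ₂, hδ₂, hacc₂⟩⟩
    exact ⟨pair σ₁ σ₂, ⟨σ₁, σ₂, rfl, hδ₁, hδ₂⟩, sacc_interTrans_pair hacc₁ hacc₂⟩

lemma isRun_interTrans_iff {L : Type} {lab : L → C₁.Q × C₂.Q} {t : STree Γ L n}
    {ρ : List ℕ → C₁.Q × C₂.Q} :
    IsRun n (interCarrier C₁ C₂) (interTrans D₁ D₂) lab t ρ ↔
      IsRun n C₁ D₁ (Prod.fst ∘ lab) t (Prod.fst ∘ ρ) ∧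
        IsRun n C₂ D₂ (Prod.snd ∘ lab) t (Prod.snd ∘ ρ) := by
  simp only [IsRun, Function.comp_apply, exists_deltaT_interTrans_iff, forall_and]
  dsimp only [interCarrier]
  simp only [Prod.ext_iff, forall_and]
  exact and_and_and_comm

lemma rootAcc_interTrans_iff {L : Type} {t : STree Γ L n} {ρ : List ℕ → C₁.Q × C₂.Q} :
    RootAcc n (interCarrier C₁ C₂) (interTrans D₁ D₂) t ρ ↔
      RootAcc n C₁ D₁ t (Prod.fst ∘ ρ) ∧ RootAcc n C₂ D₂ t (Prod.snd ∘ ρ) := by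
  constructor
  · rintro ⟨qf, σ, ⟨hqf₁, hqf₂⟩, hδ, hacc⟩
    obtain ⟨⟨σ₁, h₁⟩, ⟨σ₂, h₂⟩⟩ := exists_deltaT_interTrans_iff.1 ⟨σ, hδ, hacc⟩
    exact ⟨⟨qf.1, σ₁, hqf₁, h₁⟩, ⟨qf.2, σ₂, hqf₂, h₂⟩⟩
  · rintro ⟨⟨qf₁, σ₁, hqf₁, h₁⟩, ⟨qf₂, σ₂, hqf₂, h₂⟩⟩
    obtain ⟨σ, hδ, hacc⟩ :=
      (exists_deltaT_interTrans_iff (q := (qf₁, qf₂))).2 ⟨⟨σ₁, h₁⟩, ⟨σ₂, h₂⟩⟩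
    exact ⟨(qf₁, qf₂), σ, ⟨hqf₁, hqf₂⟩, hδ, hacc⟩

lemma acceptsFrom_interTrans_iff {L : Type} {lab : L → C₁.Q × C₂.Q} {t : STree Γ L n} :
    AcceptsFrom n (interCarrier C₁ C₂) (interTrans D₁ D₂) lab t ↔
      AcceptsFrom n C₁ D₁ (Prod.fst ∘ lab) t ∧ AcceptsFrom n C₂ D₂ (Prod.snd ∘ lab) t := by
  constructor
  · rintro ⟨ρ, hrun, hroot⟩
    obtain ⟨hrun₁, hrun₂⟩ := isRun_interTrans_iff.1 hrun
    obtain ⟨hroot₁, hroot₂⟩ := rootAcc_interTrans_iff.1 hroot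
    exact ⟨⟨_, hrun₁, hroot₁⟩, ⟨_, hrun₂, hroot₂⟩⟩
  · rintro ⟨⟨ρ₁, hrun₁, hroot₁⟩, ⟨ρ₂, hrun₂, hroot₂⟩⟩
    exact ⟨fun v => (ρ₁ v, ρ₂ v), isRun_interTrans_iff.2 ⟨hrun₁, hrun₂⟩,
      rootAcc_interTrans_iff.2 ⟨hroot₁, hroot₂⟩⟩

lemma lang_interTrans :
    Lang n (interCarrier C₁ C₂) (interTrans D₁ D₂) = Lang n C₁ D₁ ∩ Lang n C₂ D₂ :=
  Set.ext fun _ => (and_congr_right fun _ => acceptsFrom_interTrans_iff).trans and_and_left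

end

theorem astta_intersection_general {Γ P : Type} (n : ℕ)
    (C₁ : ASTCarrier Γ P) (D₁ : ASTTrans Γ C₁)
    (C₂ : ASTCarrier Γ P) (D₂ : ASTTrans Γ C₂)
    (h₁ : FiniteAut C₁ D₁) (h₂ : FiniteAut C₂ D₂) :
    ∃ (C' : ASTCarrier Γ P) (D' : ASTTrans Γ C'),
      FiniteAut C' D' ∧ Lang n C' D' = Lang n C₁ D₁ ∩ Lang n C₂ D₂ :=
  ⟨interCarrier C₁ C₂, interTrans D₁ D₂, finiteAut_interTrans h₁ h₂, lang_interTrans⟩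

/-- Annotated stack tree automata are effectively closed under intersection:
for any two order-`n` annotated stack tree automata `A = (C₁, D₁)` and
`A' = (C₂, D₂)` over the same alphabet `Γ` and control states `P`, there exists
an order-`n` annotated stack tree automaton `A''` with `L(A'') = L(A) ∩ L(A')`. -/
theorem astta_intersection {Γ P : Type} [Finite Γ] [Finite P] (n : ℕ) (hn : 1 ≤ n)
    (C₁ : ASTCarrier Γ P) (D₁ : ASTTrans Γ C₁)
    (C₂ : ASTCarrier Γ P) (D₂ : ASTTrans Γ C₂)
    (h₁ : FiniteAut C₁ D₁) (h₂ : FiniteAut C₂ D₂) :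
    ∃ (C' : ASTCarrier Γ P) (D' : ASTTrans Γ C'),
      FiniteAut C' D' ∧ Lang n C' D' = Lang n C₁ D₁ ∩ Lang n C₂ D₂ :=
  astta_intersection_general n C₁ D₁ C₂ D₂ h₁ h₂
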